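/- Let β = (m, 1, 1) be a hook with m ≥ 1, and consider the Schubert curve data of Proposition 6.2 in an (m+1)×(m+1) rectangle, with α = (m, m-1, …, 2) and γ^c = (m+1, m, m-1, …, 4, 3, 2, 2), so that γ^c/α contains a 2×2 square. Then the number of ballot semistandard fillings of γ^c/α with content β together with one □ placed at an inner co-corner (i.e., |LR(α, □, β, γ)|) equals m - 1. -/

import Mathlib

set_option linter.unusedSectionVars false
set_option maxHeartbeats 1000000

/-- The cells of the skew shape `γ^c/α` for `α = (m, m-1, …, 2)` and
`γ^c = (m+1, m, …, 3, 2, 2)` inside an `(m+1) × (m+1)` rectangle: a 2×2 square at the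
lower left corner (rows `m-1, m`, columns `0, 1`) plus `m-1` disconnected single boxes
to the northeast (in row `i`, column `m - i`, for `0 ≤ i ≤ m-2`). -/
def staircaseCells (m : ℕ) : Finset (ℕ × ℕ) :=
  ((Finset.range (m - 1)).image (fun i => (i, m - i))) ∪
    {(m - 1, 0), (m - 1, 1), (m, 0), (m, 1)}

namespace Stmt13

lemma mem_staircase {m : ℕ} {x : ℕ × ℕ} :
    x ∈ staircaseCells m ↔
      (∃ j, j < m - 1 ∧ x = (j, m - j)) ∨
        x = (m-1, 0) ∨ x = (m-1, 1) ∨ x = (m, 0) ∨ x = (m, 1) := by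
  constructor
  · intro h
    rcases Finset.mem_union.mp h with h | h
    · obtain ⟨i, hi, hix⟩ := Finset.mem_image.mp h
      exact Or.inl ⟨i, Finset.mem_range.mp hi, hix.symm⟩
    · simp only [Finset.mem_insert, Finset.mem_singleton] at h
      tauto
  · intro h
    apply Finset.mem_union.mpr
    rcases h with ⟨j, hj, hx⟩ | h | h | h | h
    · exact Or.inl (Finset.mem_image.mpr ⟨j, Finset.mem_range.mpr hj, hx.symm⟩)
    all_goals exact Or.inr (by simp [h])

lemma cell_cases {m : ℕ} (x : {x // x ∈ staircaseCells m}) :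
    (x.1.1 < m - 1 ∧ x.1 = (x.1.1, m - x.1.1)) ∨ x.1 = (m-1, 0) ∨ x.1 = (m-1, 1) ∨
      x.1 = (m, 0) ∨ x.1 = (m, 1) := by
  obtain ⟨j, hj, h⟩ | h | h | h | h := mem_staircase.mp x.2
  · exact Or.inl (by rw [h]; exact ⟨hj, rfl⟩)
  all_goals tauto

lemma row_le {m : ℕ} (x : {x // x ∈ staircaseCells m}) : x.1.1 ≤ m := by
  obtain ⟨hj, h⟩ | h | h | h | h := cell_cases x <;> first | omega | (rw [h]; omega) | (rw [h])

lemma memA {m : ℕ} : ((m : ℕ) - 1, (0 : ℕ)) ∈ staircaseCells m :=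
  mem_staircase.mpr (by tauto)
lemma memB {m : ℕ} : ((m : ℕ) - 1, (1 : ℕ)) ∈ staircaseCells m :=
  mem_staircase.mpr (by tauto)
lemma memC {m : ℕ} : ((m : ℕ), (0 : ℕ)) ∈ staircaseCells m :=
  mem_staircase.mpr (by tauto)
lemma memD {m : ℕ} : ((m : ℕ), (1 : ℕ)) ∈ staircaseCells m :=
  mem_staircase.mpr (by tauto)

lemma card_staircase {m : ℕ} (hm : 1 ≤ m) : (staircaseCells m).card = m + 3 := by
  unfold staircaseCells
  rw [Finset.card_union_of_disjoint, Finset.card_image_of_injective _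
      (fun a b hab => (Prod.ext_iff.mp hab).1), Finset.card_range]
  · have h1 : ((m : ℕ) - 1, (0 : ℕ)) ∉ ({(m - 1, 1), (m, 0), (m, 1)} : Finset (ℕ × ℕ)) := by
      simp [Prod.ext_iff]; omega
    have h2 : ((m : ℕ) - 1, (1 : ℕ)) ∉ ({(m, 0), (m, 1)} : Finset (ℕ × ℕ)) := by
      simp [Prod.ext_iff]; omega
    have h3 : ((m : ℕ), (0 : ℕ)) ∉ ({(m, 1)} : Finset (ℕ × ℕ)) := by simp
    rw [Finset.card_insert_of_notMem h1, Finset.card_insert_of_notMem h2,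
      Finset.card_insert_of_notMem h3, Finset.card_singleton]
    omega
  · rw [Finset.disjoint_left]
    rintro ⟨a, b⟩ ha hb
    obtain ⟨i, hi, hix⟩ := Finset.mem_image.mp ha
    rw [Finset.mem_range] at hi
    simp only [Prod.mk.injEq] at hix
    simp only [Finset.mem_insert, Finset.mem_singleton, Prod.mk.injEq] at hb
    omega

lemma filter_eq_singleton {α : Type*} [Fintype α] [DecidableEq α] {g : α → ℕ} {v : ℕ} {a : α}
    (hga : g a = v) (hu : ∀ x, g x = v → x = a) :
    Finset.univ.filter (fun x => g x = v) = {a} := by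
  ext x
  simp only [Finset.mem_filter, Finset.mem_univ, true_and, Finset.mem_singleton]
  exact ⟨fun h => hu x h, fun h => h ▸ hga⟩

lemma four_fibers {α : Type*} [Fintype α] [DecidableEq α] (g : α → ℕ) (hg : ∀ x, g x ≤ 3) :
    (Finset.univ.filter (fun x => g x = 0)).card + (Finset.univ.filter (fun x => g x = 1)).card
      + (Finset.univ.filter (fun x => g x = 2)).card
      + (Finset.univ.filter (fun x => g x = 3)).card = Fintype.card α := by
  have h := Finset.card_eq_sum_card_fiberwise
    (s := (Finset.univ : Finset α)) (t := ({0,1,2,3} : Finset ℕ)) (f := g)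
    (fun x _ => by have := hg x; simp; omega)
  rw [Finset.card_univ] at h
  rw [show ({0,1,2,3} : Finset ℕ) = insert 0 (insert 1 (insert 2 {3})) from rfl] at h
  rw [Finset.sum_insert (by simp), Finset.sum_insert (by simp), Finset.sum_insert (by simp),
    Finset.sum_singleton] at h
  omega

def cellr (m r : ℕ) : ℕ × ℕ := (r, if r = m - 1 then 1 else m - r)

lemma cellr_fst (m r : ℕ) : (cellr m r).1 = r := rfl

def fr (m r : ℕ) (x : ℕ × ℕ) : ℕ :=
  if x = (m - 1, 0) then 0
  else if x = (m, 1) then 3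
  else if x = cellr m r then 2 else 1

lemma pair_ne {a b c d : ℕ} (h : a ≠ c ∨ b ≠ d) : (a, b) ≠ (c, d) := by
  intro he; rw [Prod.ext_iff] at he; tauto

section
variable {m r : ℕ} (hr1 : 1 ≤ r) (hrm : r ≤ m - 1)

lemma fr_of {x : ℕ × ℕ} (h1 : x ≠ (m-1,0)) (h2 : x ≠ (m,1)) :
    fr m r x = if x = cellr m r then 2 else 1 := by simp [fr, h1, h2]

include hr1 hrm

lemma val_A : fr m r (m - 1, 0) = 0 := by simp [fr]

lemma val_D : fr m r (m, 1) = 3 := by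
  rw [fr, if_neg (pair_ne (Or.inl (by omega))), if_pos rfl]

lemma val_C : fr m r (m, 0) = 1 := by
  rw [fr_of (pair_ne (Or.inl (by omega))) (pair_ne (Or.inr (by omega))),
    if_neg (pair_ne (Or.inl (by simp [cellr]; omega)))]

lemma val_B : fr m r (m - 1, 1) = if r = m - 1 then 2 else 1 := by
  rw [fr_of (pair_ne (Or.inr (by omega))) (pair_ne (Or.inl (by omega)))]
  by_cases h : r = m - 1
  · rw [if_pos (by simp [cellr, h]), if_pos h]
  · rw [if_neg (pair_ne (Or.inl (by simp [cellr]; omega))), if_neg h]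

lemma val_single {j : ℕ} (hj : j < m - 1) :
    fr m r (j, m - j) = if j = r then 2 else 1 := by
  rw [fr_of (pair_ne (Or.inl (by omega))) (pair_ne (Or.inl (by omega)))]
  by_cases h : j = r
  · rw [if_pos, if_pos h]
    subst h
    simp only [cellr, if_neg (show ¬ j = m - 1 by omega)]
  · rw [if_neg, if_neg h]
    by_cases h' : r = m - 1 <;> simp only [cellr, h', if_pos, if_neg] <;>
      exact pair_ne (Or.inl (by omega))

lemma cellr_mem : cellr m r ∈ staircaseCells m := by
  rw [mem_staircase]
  by_cases h : r = m - 1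
  · right; right; left; simp [cellr, h]
  · left; exact ⟨r, by omega, by simp [cellr, h]⟩

lemma val_cellr : fr m r (cellr m r) = 2 := by
  by_cases h : r = m - 1
  · rw [show cellr m r = (m-1, 1) by simp [cellr, h], val_B hr1 hrm, if_pos h]
  · rw [show cellr m r = (r, m - r) by simp [cellr, h],
      val_single hr1 hrm (by omega), if_pos rfl]

omit hr1 hrm

lemma fr_le (x : ℕ × ℕ) : fr m r x ≤ 3 := by
  rw [fr]; split_ifs <;> omega

lemma fr_eq_two {x : ℕ × ℕ} (hx : fr m r x = 2) : x = cellr m r := by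
  by_contra h; rw [fr] at hx; split_ifs at hx <;> omega

lemma fr_eq_zero {x : ℕ × ℕ} (hx : fr m r x = 0) : x = (m - 1, 0) := by
  by_contra h; rw [fr] at hx; split_ifs at hx <;> omega

lemma fr_eq_three {x : ℕ × ℕ} (hx : fr m r x = 3) : x = (m, 1) := by
  by_contra h; rw [fr] at hx; split_ifs at hx <;> omega

include hr1 hrm

lemma fr_row (x y : {x // x ∈ staircaseCells m}) (hrw : x.1.1 = y.1.1)
    (hcl : x.1.2 ≤ y.1.2) : fr m r x.1 ≤ fr m r y.1 := by
  obtain ⟨hj, hx⟩ | hx | hx | hx | hx := cell_cases x <;>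
    obtain ⟨hk, hy⟩ | hy | hy | hy | hy := cell_cases y <;>
    rw [hx, hy] at hcl ⊢ <;> rw [hx, hy] at hrw <;> dsimp only at hrw hcl ⊢ <;>
    first
    | omega
    | exact le_rfl
    | (rw [val_A hr1 hrm]; exact Nat.zero_le _)
    | (rw [val_single hr1 hrm hj, val_single hr1 hrm (show y.1.1 < m - 1 by omega)];
        split_ifs <;> omega)
    | (rw [val_C hr1 hrm, val_D hr1 hrm]; omega)

lemma fr_col (x y : {x // x ∈ staircaseCells m}) (hcl : x.1.2 = y.1.2)
    (hrw : x.1.1 < y.1.1) : fr m r x.1 < fr m r y.1 := by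
  obtain ⟨hj, hx⟩ | hx | hx | hx | hx := cell_cases x <;>
    obtain ⟨hk, hy⟩ | hy | hy | hy | hy := cell_cases y <;>
    rw [hx, hy] at hcl ⊢ <;> rw [hx, hy] at hrw <;> dsimp only at hrw hcl ⊢ <;>
    first
    | omega
    | (rw [val_A hr1 hrm, val_C hr1 hrm]; omega)
    | (rw [val_B hr1 hrm, val_D hr1 hrm]; split_ifs <;> omega)

lemma fr_ballot (x : {x // x ∈ staircaseCells m}) (i : ℕ) (hi : 1 ≤ i) :
    (Finset.univ.filter (fun y : {x // x ∈ staircaseCells m} =>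
        (y.1.1 < x.1.1 ∨ (y.1.1 = x.1.1 ∧ x.1.2 ≤ y.1.2)) ∧ fr m r y.1 = i + 1)).card
      ≤ (Finset.univ.filter (fun y : {x // x ∈ staircaseCells m} =>
        (y.1.1 < x.1.1 ∨ (y.1.1 = x.1.1 ∧ x.1.2 ≤ y.1.2)) ∧ fr m r y.1 = i)).card := by
  rcases show i = 1 ∨ i = 2 ∨ 4 ≤ i + 1 by omega with hi1 | hi2 | hbig
  · subst hi1
    have hsub : ∀ y ∈ Finset.univ.filter (fun y : {x // x ∈ staircaseCells m} =>
        (y.1.1 < x.1.1 ∨ (y.1.1 = x.1.1 ∧ x.1.2 ≤ y.1.2)) ∧ fr m r y.1 = 1 + 1),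
        y = (⟨cellr m r, cellr_mem hr1 hrm⟩ : {x // x ∈ staircaseCells m}) := by
      intro y hy
      rw [Finset.mem_filter] at hy
      exact Subtype.ext (fr_eq_two hy.2.2)
    have hle1 : (Finset.univ.filter (fun y : {x // x ∈ staircaseCells m} =>
        (y.1.1 < x.1.1 ∨ (y.1.1 = x.1.1 ∧ x.1.2 ≤ y.1.2)) ∧ fr m r y.1 = 1 + 1)).card ≤ 1 :=
      Finset.card_le_one.mpr (fun a ha b hb => (hsub a ha).trans (hsub b hb).symm)
    rcases Nat.eq_zero_or_pos (Finset.univ.filter (fun y : {x // x ∈ staircaseCells m} =>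
        (y.1.1 < x.1.1 ∨ (y.1.1 = x.1.1 ∧ x.1.2 ≤ y.1.2)) ∧ fr m r y.1 = 1 + 1)).card
      with h0 | hpos
    · omega
    · obtain ⟨y, hy⟩ := Finset.card_pos.mp hpos
      have hyc := hsub y hy
      rw [Finset.mem_filter, hyc] at hy
      have hsuf := hy.2.1
      rw [cellr_fst] at hsuf
      have hmem : ((0 : ℕ), m) ∈ staircaseCells m := by
        rw [mem_staircase]; exact Or.inl ⟨0, by omega, by simp⟩
      have hone : fr m r ((0 : ℕ), m) = 1 := by
        have := val_single hr1 hrm (show (0:ℕ) < m - 1 by omega)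
        simpa [if_neg (show ¬ (0 : ℕ) = r by omega)] using this
      have hin : (⟨((0 : ℕ), m), hmem⟩ : {x // x ∈ staircaseCells m}) ∈
          Finset.univ.filter (fun y : {x // x ∈ staircaseCells m} =>
            (y.1.1 < x.1.1 ∨ (y.1.1 = x.1.1 ∧ x.1.2 ≤ y.1.2)) ∧ fr m r y.1 = 1) :=
        Finset.mem_filter.mpr ⟨Finset.mem_univ _, Or.inl (by dsimp only; omega), hone⟩
      have := Finset.card_pos.mpr ⟨_, hin⟩
      omega
  · subst hi2
    have hsub : ∀ y ∈ Finset.univ.filter (fun y : {x // x ∈ staircaseCells m} =>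
        (y.1.1 < x.1.1 ∨ (y.1.1 = x.1.1 ∧ x.1.2 ≤ y.1.2)) ∧ fr m r y.1 = 2 + 1),
        y.1 = ((m : ℕ), (1 : ℕ)) := by
      intro y hy
      rw [Finset.mem_filter] at hy
      exact fr_eq_three hy.2.2
    have hle1 : (Finset.univ.filter (fun y : {x // x ∈ staircaseCells m} =>
        (y.1.1 < x.1.1 ∨ (y.1.1 = x.1.1 ∧ x.1.2 ≤ y.1.2)) ∧ fr m r y.1 = 2 + 1)).card ≤ 1 :=
      Finset.card_le_one.mpr
        (fun a ha b hb => Subtype.ext ((hsub a ha).trans (hsub b hb).symm))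
    rcases Nat.eq_zero_or_pos (Finset.univ.filter (fun y : {x // x ∈ staircaseCells m} =>
        (y.1.1 < x.1.1 ∨ (y.1.1 = x.1.1 ∧ x.1.2 ≤ y.1.2)) ∧ fr m r y.1 = 2 + 1)).card
      with h0 | hpos
    · omega
    · obtain ⟨y, hy⟩ := Finset.card_pos.mp hpos
      have hyD := hsub y hy
      rw [Finset.mem_filter] at hy
      have hsuf := hy.2.1
      rw [hyD] at hsuf
      dsimp only at hsuf
      have hxm : x.1.1 = m := by have := row_le x; omega
      have hin : (⟨cellr m r, cellr_mem hr1 hrm⟩ : {x // x ∈ staircaseCells m}) ∈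
          Finset.univ.filter (fun y : {x // x ∈ staircaseCells m} =>
            (y.1.1 < x.1.1 ∨ (y.1.1 = x.1.1 ∧ x.1.2 ≤ y.1.2)) ∧ fr m r y.1 = 2) :=
        Finset.mem_filter.mpr ⟨Finset.mem_univ _,
          Or.inl (by rw [cellr_fst]; omega), val_cellr hr1 hrm⟩
      have := Finset.card_pos.mpr ⟨_, hin⟩
      omega
  · have : (Finset.univ.filter (fun y : {x // x ∈ staircaseCells m} =>
        (y.1.1 < x.1.1 ∨ (y.1.1 = x.1.1 ∧ x.1.2 ≤ y.1.2)) ∧ fr m r y.1 = i + 1)).card = 0 := by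
      rw [Finset.card_eq_zero, Finset.filter_eq_empty_iff]
      rintro y -
      rintro ⟨-, hv⟩
      have := fr_le (m := m) (r := r) y.1
      omega
    omega

lemma fr_count0 :
    (Finset.univ.filter (fun x : {x // x ∈ staircaseCells m} => fr m r x.1 = 0)).card = 1 := by
  rw [filter_eq_singleton (g := fun x : {x // x ∈ staircaseCells m} => fr m r x.1) (a := ⟨((m:ℕ)-1, (0:ℕ)), memA⟩) (val_A hr1 hrm)
    (fun x hx => Subtype.ext (fr_eq_zero hx)), Finset.card_singleton]

lemma fr_count2 :
    (Finset.univ.filter (fun x : {x // x ∈ staircaseCells m} => fr m r x.1 = 2)).card = 1 := by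
  rw [filter_eq_singleton (g := fun x : {x // x ∈ staircaseCells m} => fr m r x.1) (a := ⟨cellr m r, cellr_mem hr1 hrm⟩) (val_cellr hr1 hrm)
    (fun x hx => Subtype.ext (fr_eq_two hx)), Finset.card_singleton]

lemma fr_count3 :
    (Finset.univ.filter (fun x : {x // x ∈ staircaseCells m} => fr m r x.1 = 3)).card = 1 := by
  rw [filter_eq_singleton (g := fun x : {x // x ∈ staircaseCells m} => fr m r x.1) (a := ⟨((m:ℕ), (1:ℕ)), memD⟩) (val_D hr1 hrm)
    (fun x hx => Subtype.ext (fr_eq_three hx)), Finset.card_singleton]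

lemma fr_count1 :
    (Finset.univ.filter (fun x : {x // x ∈ staircaseCells m} => fr m r x.1 = 1)).card = m := by
  have h4 := four_fibers (fun x : {x // x ∈ staircaseCells m} => fr m r x.1)
    (fun x => fr_le x.1)
  beta_reduce at h4
  rw [Fintype.card_coe, card_staircase (show 1 ≤ m by omega), fr_count0 hr1 hrm,
    fr_count2 hr1 hrm, fr_count3 hr1 hrm] at h4
  omega

end

/-- the predicate in the theorem -/
def good (m : ℕ) (f : {x // x ∈ staircaseCells m} → ℕ) : Prop :=
  (∀ x y : {x // x ∈ staircaseCells m},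
    x.1.1 = y.1.1 → x.1.2 ≤ y.1.2 → f x ≤ f y) ∧
  (∀ x y : {x // x ∈ staircaseCells m},
    x.1.2 = y.1.2 → x.1.1 < y.1.1 → f x < f y) ∧
  ((Finset.univ.filter (fun x => f x = 0)).card = 1) ∧
  ((Finset.univ.filter (fun x => f x = 1)).card = m) ∧
  ((Finset.univ.filter (fun x => f x = 2)).card = 1) ∧
  ((Finset.univ.filter (fun x => f x = 3)).card = 1) ∧
  (∀ x, f x ≤ 3) ∧
  (∀ x : {x // x ∈ staircaseCells m}, ∀ i, 1 ≤ i →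
    (Finset.univ.filter (fun y : {x // x ∈ staircaseCells m} =>
        (y.1.1 < x.1.1 ∨ (y.1.1 = x.1.1 ∧ x.1.2 ≤ y.1.2)) ∧ f y = i + 1)).card
    ≤ (Finset.univ.filter (fun y : {x // x ∈ staircaseCells m} =>
        (y.1.1 < x.1.1 ∨ (y.1.1 = x.1.1 ∧ x.1.2 ≤ y.1.2)) ∧ f y = i)).card)

lemma fr_good {m r : ℕ} (hr1 : 1 ≤ r) (hrm : r ≤ m - 1) :
    good m (fun x => fr m r x.1) :=
  ⟨fr_row hr1 hrm, fr_col hr1 hrm, fr_count0 hr1 hrm, fr_count1 hr1 hrm,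
    fr_count2 hr1 hrm, fr_count3 hr1 hrm, fun x => fr_le x.1, fr_ballot hr1 hrm⟩

lemma good_surj {m : ℕ} (hm : 1 ≤ m) (f : {x // x ∈ staircaseCells m} → ℕ)
    (hf : good m f) : ∃ r : ℕ, (1 ≤ r ∧ r ≤ m - 1) ∧ f = fun x => fr m r x.1 := by
  obtain ⟨hrow, hcol, hc0, hc1, hc2, hc3, hle, hballot⟩ := hf
  -- extract the unique cells of values 0, 2, 3
  obtain ⟨x0, hx0⟩ := Finset.card_eq_one.mp hc0
  have hx0v : f x0 = 0 := by
    have := Finset.mem_singleton_self x0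
    rw [← hx0, Finset.mem_filter] at this; exact this.2
  have hu0 : ∀ y, f y = 0 → y = x0 := by
    intro y hy
    have : y ∈ Finset.univ.filter (fun x => f x = 0) :=
      Finset.mem_filter.mpr ⟨Finset.mem_univ y, hy⟩
    rw [hx0, Finset.mem_singleton] at this; exact this
  obtain ⟨x2, hx2⟩ := Finset.card_eq_one.mp hc2
  have hx2v : f x2 = 2 := by
    have := Finset.mem_singleton_self x2
    rw [← hx2, Finset.mem_filter] at this; exact this.2
  have hu2 : ∀ y, f y = 2 → y = x2 := by
    intro y hy
    have : y ∈ Finset.univ.filter (fun x => f x = 2) :=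
      Finset.mem_filter.mpr ⟨Finset.mem_univ y, hy⟩
    rw [hx2, Finset.mem_singleton] at this; exact this
  obtain ⟨x3, hx3⟩ := Finset.card_eq_one.mp hc3
  have hx3v : f x3 = 3 := by
    have := Finset.mem_singleton_self x3
    rw [← hx3, Finset.mem_filter] at this; exact this.2
  have hu3 : ∀ y, f y = 3 → y = x3 := by
    intro y hy
    have : y ∈ Finset.univ.filter (fun x => f x = 3) :=
      Finset.mem_filter.mpr ⟨Finset.mem_univ y, hy⟩
    rw [hx3, Finset.mem_singleton] at this; exact this
  -- ballot extraction principle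
  have ballot_ex : ∀ (x z : {x // x ∈ staircaseCells m}) (i : ℕ), 1 ≤ i → f z = i + 1 →
      (z.1.1 < x.1.1 ∨ (z.1.1 = x.1.1 ∧ x.1.2 ≤ z.1.2)) →
      ∃ y : {x // x ∈ staircaseCells m},
        (y.1.1 < x.1.1 ∨ (y.1.1 = x.1.1 ∧ x.1.2 ≤ y.1.2)) ∧ f y = i := by
    intro x z i hi hz hzx
    have h1 : 0 < (Finset.univ.filter (fun y : {x // x ∈ staircaseCells m} =>
        (y.1.1 < x.1.1 ∨ (y.1.1 = x.1.1 ∧ x.1.2 ≤ y.1.2)) ∧ f y = i + 1)).card :=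
      Finset.card_pos.mpr ⟨z, Finset.mem_filter.mpr ⟨Finset.mem_univ z, hzx, hz⟩⟩
    obtain ⟨y, hy⟩ := Finset.card_pos.mp (lt_of_lt_of_le h1 (hballot x i hi))
    exact ⟨y, (Finset.mem_filter.mp hy).2⟩
  -- 2x2 inequalities
  have hAB : f ⟨((m:ℕ)-1, (0:ℕ)), memA⟩ ≤ f ⟨((m:ℕ)-1, (1:ℕ)), memB⟩ :=
    hrow _ _ rfl (by dsimp only; omega)
  have hAC : f ⟨((m:ℕ)-1, (0:ℕ)), memA⟩ < f ⟨((m:ℕ), (0:ℕ)), memC⟩ :=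
    hcol _ _ rfl (by dsimp only; omega)
  have hBD : f ⟨((m:ℕ)-1, (1:ℕ)), memB⟩ < f ⟨((m:ℕ), (1:ℕ)), memD⟩ :=
    hcol _ _ rfl (by dsimp only; omega)
  have hCD : f ⟨((m:ℕ), (0:ℕ)), memC⟩ ≤ f ⟨((m:ℕ), (1:ℕ)), memD⟩ :=
    hrow _ _ rfl (by dsimp only; omega)
  -- Step 1 : the 3 sits at (m, 1)
  have hx3D : x3.1 = ((m:ℕ), (1:ℕ)) := by
    obtain ⟨hjlt, hx3s⟩ | hx3s | hx3s | hx3s | hx3s := cell_cases x3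
    · exfalso
      obtain ⟨y2, hsuf, hy2v⟩ := ballot_ex x3 x3 2 (by omega) hx3v (Or.inr ⟨rfl, le_rfl⟩)
      have hy2x2 : y2 = x2 := hu2 y2 hy2v
      have hy2lt : y2.1.1 < x3.1.1 := by
        rcases hsuf with h | ⟨he, hcl⟩
        · exact h
        · exfalso
          obtain ⟨hk, hy2s⟩ | hy2s | hy2s | hy2s | hy2s := cell_cases y2
          · have h1 : y2.1 = x3.1 := by rw [hy2s, hx3s, he]
            have h2 : y2 = x3 := Subtype.ext h1
            rw [h2, hx3v] at hy2v
            omega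
          all_goals (rw [hy2s] at he; dsimp only at he; omega)
      have hrx2 : x2.1.1 < m - 1 := by rw [← hy2x2]; omega
      have hD2 : f ⟨((m:ℕ), (1:ℕ)), memD⟩ ≠ 2 := fun h => by
        have h' := congrArg (fun z : {x // x ∈ staircaseCells m} => z.1.1) (hu2 _ h)
        dsimp only at h'
        omega
      have hD3 : f ⟨((m:ℕ), (1:ℕ)), memD⟩ ≠ 3 := fun h => by
        have h' := congrArg (fun z : {x // x ∈ staircaseCells m} => z.1.1) (hu3 _ h)
        dsimp only at h'
        omega
      have hDle := hle ⟨((m:ℕ), (1:ℕ)), memD⟩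
      have hA0 : f ⟨((m:ℕ)-1, (0:ℕ)), memA⟩ = 0 := by omega
      have hB0 : f ⟨((m:ℕ)-1, (1:ℕ)), memB⟩ = 0 := by omega
      have h5 := (hu0 _ hA0).trans (hu0 _ hB0).symm
      have h6 := congrArg (fun z : {x // x ∈ staircaseCells m} => z.1.2) h5
      dsimp only at h6
      omega
    · exfalso
      have h1 : x3 = ⟨((m:ℕ)-1, (0:ℕ)), memA⟩ := Subtype.ext hx3s
      rw [h1] at hx3v
      have := hle ⟨((m:ℕ), (0:ℕ)), memC⟩
      omega
    · exfalso
      have h1 : x3 = ⟨((m:ℕ)-1, (1:ℕ)), memB⟩ := Subtype.ext hx3s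
      rw [h1] at hx3v
      have := hle ⟨((m:ℕ), (1:ℕ)), memD⟩
      omega
    · exfalso
      have h1 : x3 = ⟨((m:ℕ), (0:ℕ)), memC⟩ := Subtype.ext hx3s
      rw [h1] at hx3v
      have hD3 : f ⟨((m:ℕ), (1:ℕ)), memD⟩ = 3 := by
        have := hle ⟨((m:ℕ), (1:ℕ)), memD⟩; omega
      have h2 := (hu3 _ hD3).trans h1
      have h3 := congrArg (fun z : {x // x ∈ staircaseCells m} => z.1.2) h2
      dsimp only at h3
      omega
    · exact hx3s
  have hx3isD : x3 = ⟨((m:ℕ), (1:ℕ)), memD⟩ := Subtype.ext hx3D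
  have hfD : f ⟨((m:ℕ), (1:ℕ)), memD⟩ = 3 := by rw [← hx3isD]; exact hx3v
  -- Step 2 : the 2 sits strictly above row m
  have hx2lt : x2.1.1 < m := by
    obtain ⟨y2, hsuf, hy2v⟩ := ballot_ex ⟨((m:ℕ), (1:ℕ)), memD⟩ ⟨((m:ℕ), (1:ℕ)), memD⟩ 2
      (by omega) hfD (Or.inr ⟨rfl, le_rfl⟩)
    have hy2x2 : y2 = x2 := hu2 y2 hy2v
    rw [hy2x2] at hsuf
    dsimp only at hsuf
    rcases hsuf with h | ⟨he, hcl⟩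
    · exact h
    · exfalso
      obtain ⟨hk, hx2s⟩ | hx2s | hx2s | hx2s | hx2s := cell_cases x2
      · omega
      · rw [hx2s] at he; dsimp only at he; omega
      · rw [hx2s] at he; dsimp only at he; omega
      · rw [hx2s] at hcl; dsimp only at hcl; omega
      · have h1 : x2 = ⟨((m:ℕ), (1:ℕ)), memD⟩ := Subtype.ext hx2s
        rw [h1, hfD] at hx2v
        omega
  -- Step 3 : the square (m-1, 0) holds the 0
  have hfA : f ⟨((m:ℕ)-1, (0:ℕ)), memA⟩ = 0 := by
    by_contra h
    have h2 : 2 ≤ f ⟨((m:ℕ), (0:ℕ)), memC⟩ := by omega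
    have h3 : f ⟨((m:ℕ), (0:ℕ)), memC⟩ ≠ 3 := fun hc => by
      have h' := congrArg (fun z : {x // x ∈ staircaseCells m} => z.1)
        ((hu3 _ hc).trans hx3isD)
      dsimp only at h'
      exact absurd (Prod.ext_iff.mp h').2 (by omega)
    have h4 : f ⟨((m:ℕ), (0:ℕ)), memC⟩ ≠ 2 := fun hc => by
      have h' := congrArg (fun z : {x // x ∈ staircaseCells m} => z.1.1) (hu2 _ hc)
      dsimp only at h'
      omega
    have := hle ⟨((m:ℕ), (0:ℕ)), memC⟩
    omega
  have hx0A : x0 = ⟨((m:ℕ)-1, (0:ℕ)), memA⟩ := (hu0 _ hfA).symm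
  -- final reconstruction, given the position of the 2
  have hfinal : ∀ r : ℕ, 1 ≤ r → r ≤ m - 1 → x2.1 = cellr m r →
      f = fun x => fr m r x.1 := by
    intro r hr1 hrm hx2c
    funext x
    show f x = fr m r x.1
    by_cases h0 : x.1 = (m - 1, 0)
    · rw [h0, val_A hr1 hrm, show x = ⟨((m:ℕ)-1, (0:ℕ)), memA⟩ from Subtype.ext h0]
      exact hfA
    by_cases h3 : x.1 = ((m:ℕ), (1:ℕ))
    · rw [h3, val_D hr1 hrm, show x = ⟨((m:ℕ), (1:ℕ)), memD⟩ from Subtype.ext h3]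
      exact hfD
    by_cases h2 : x.1 = cellr m r
    · rw [h2, val_cellr hr1 hrm, show x = x2 from Subtype.ext (h2.trans hx2c.symm)]
      exact hx2v
    · rw [fr_of h0 h3, if_neg h2]
      have hne0 : f x ≠ 0 := fun h =>
        h0 (congrArg Subtype.val ((hu0 x h).trans hx0A))
      have hne2 : f x ≠ 2 := fun h =>
        h2 ((congrArg Subtype.val (hu2 x h)).trans hx2c)
      have hne3 : f x ≠ 3 := fun h =>
        h3 ((congrArg Subtype.val (hu3 x h)).trans hx3D)
      have := hle x
      omega
  -- Step 4 : locate the 2 and conclude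
  obtain ⟨y1, hsuf1, hy1v⟩ := ballot_ex x2 x2 1 le_rfl (by omega) (Or.inr ⟨rfl, le_rfl⟩)
  obtain ⟨hk, hx2s⟩ | hx2s | hx2s | hx2s | hx2s := cell_cases x2
  · -- the 2 is a single box in row x2.1.1
    have hr1 : 1 ≤ x2.1.1 := by
      rcases hsuf1 with h | ⟨he, hcl⟩
      · omega
      · exfalso
        obtain ⟨hk', hy1s⟩ | hy1s | hy1s | hy1s | hy1s := cell_cases y1
        · have h1 : y1.1 = x2.1 := by rw [hy1s, hx2s, he]
          have h2 : y1 = x2 := Subtype.ext h1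
          rw [h2, hx2v] at hy1v
          omega
        all_goals (rw [hy1s] at he; dsimp only at he; omega)
    refine ⟨x2.1.1, ⟨hr1, by omega⟩, hfinal x2.1.1 hr1 (by omega) ?_⟩
    show x2.1 = (x2.1.1, if x2.1.1 = m - 1 then 1 else m - x2.1.1)
    rw [if_neg (show ¬ x2.1.1 = m - 1 by omega)]
    exact hx2s
  · -- the 2 cannot be at (m-1, 0) : that square holds the 0
    exfalso
    have h1 : x2 = ⟨((m:ℕ)-1, (0:ℕ)), memA⟩ := Subtype.ext hx2s
    rw [h1, hfA] at hx2v
    omega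
  · -- the 2 is at (m-1, 1)
    have hm2 : 1 ≤ m - 1 := by
      rcases hsuf1 with h | ⟨he, hcl⟩
      · rw [hx2s] at h; dsimp only at h; omega
      · exfalso
        rw [hx2s] at he hcl; dsimp only at he hcl
        obtain ⟨hk', hy1s⟩ | hy1s | hy1s | hy1s | hy1s := cell_cases y1
        · omega
        · rw [hy1s] at hcl; dsimp only at hcl; omega
        · have h1 : y1 = x2 := Subtype.ext (hy1s.trans hx2s.symm)
          rw [h1, hx2v] at hy1v
          omega
        · rw [hy1s] at he; dsimp only at he; omega
        · rw [hy1s] at he; dsimp only at he; omega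
    refine ⟨m - 1, ⟨hm2, le_rfl⟩, hfinal (m - 1) hm2 le_rfl ?_⟩
    show x2.1 = (m - 1, if m - 1 = m - 1 then 1 else m - (m - 1))
    rw [if_pos rfl]
    exact hx2s
  · exfalso; rw [hx2s] at hx2lt; dsimp only at hx2lt; omega
  · exfalso; rw [hx2s] at hx2lt; dsimp only at hx2lt; omega

end Stmt13

open Stmt13 in
/-- The number of ballot semistandard fillings of `γ^c/α` with content `β = (m,1,1)`
(i.e. `m` ones, one `2`, one `3`) together with one `□` (value `0`, treated as smaller
than all numbers, hence placed at an inner co-corner), i.e. `|LR(α, □, β, γ)|`,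
equals `m - 1`.  Semistandardness means rows weakly increase and columns strictly
increase; ballotness means every weak suffix of the reading word (rows read bottom to
top, left to right within rows) has at least as many `i`'s as `(i+1)`'s, for `i ≥ 1`. -/
theorem stmt13 (m : ℕ) (hm : 1 ≤ m) :
    Nat.card {f : {x // x ∈ staircaseCells m} → ℕ //
      (∀ x y : {x // x ∈ staircaseCells m},
        x.1.1 = y.1.1 → x.1.2 ≤ y.1.2 → f x ≤ f y) ∧
      (∀ x y : {x // x ∈ staircaseCells m},
        x.1.2 = y.1.2 → x.1.1 < y.1.1 → f x < f y) ∧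
      ((Finset.univ.filter (fun x => f x = 0)).card = 1) ∧
      ((Finset.univ.filter (fun x => f x = 1)).card = m) ∧
      ((Finset.univ.filter (fun x => f x = 2)).card = 1) ∧
      ((Finset.univ.filter (fun x => f x = 3)).card = 1) ∧
      (∀ x, f x ≤ 3) ∧
      (∀ x : {x // x ∈ staircaseCells m}, ∀ i, 1 ≤ i →
        (Finset.univ.filter (fun y : {x // x ∈ staircaseCells m} =>
            (y.1.1 < x.1.1 ∨ (y.1.1 = x.1.1 ∧ x.1.2 ≤ y.1.2)) ∧ f y = i + 1)).card
        ≤ (Finset.univ.filter (fun y : {x // x ∈ staircaseCells m} =>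
            (y.1.1 < x.1.1 ∨ (y.1.1 = x.1.1 ∧ x.1.2 ≤ y.1.2)) ∧ f y = i)).card)}
      = m - 1 := by
  show Nat.card {f : {x // x ∈ staircaseCells m} → ℕ // good m f} = m - 1
  have hIcc : Nat.card {r // r ∈ Finset.Icc 1 (m - 1)} = m - 1 := by
    rw [Nat.card_eq_fintype_card, Fintype.card_coe, Nat.card_Icc]; omega
  rw [← hIcc]
  refine (Nat.card_congr (Equiv.ofBijective
    (fun r : {r // r ∈ Finset.Icc 1 (m - 1)} =>
      (⟨fun x => fr m r.1 x.1,
        fr_good (Finset.mem_Icc.mp r.2).1 (Finset.mem_Icc.mp r.2).2⟩ :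
        {f : {x // x ∈ staircaseCells m} → ℕ // good m f}))
    ⟨?_, ?_⟩)).symm
  · -- injective
    intro r r' h
    have h1 := congrFun (congrArg Subtype.val h)
      ⟨cellr m r.1, cellr_mem (Finset.mem_Icc.mp r.2).1 (Finset.mem_Icc.mp r.2).2⟩
    dsimp only at h1
    rw [val_cellr (Finset.mem_Icc.mp r.2).1 (Finset.mem_Icc.mp r.2).2] at h1
    have h2 := fr_eq_two h1.symm
    have h3 := congrArg Prod.fst h2
    rw [cellr_fst, cellr_fst] at h3
    exact Subtype.ext h3
  · -- surjective
    rintro ⟨f, hf⟩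
    obtain ⟨r, ⟨hr1, hrm⟩, hfr⟩ := good_surj hm f hf
    exact ⟨⟨r, Finset.mem_Icc.mpr ⟨hr1, hrm⟩⟩, Subtype.ext hfr.symm⟩
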